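/- arXiv:2309.15919 — 5 statements merged into one kernel-verified Lean document; each statement's English description precedes it below -/
import Mathlib

section
/- Let f and φ be differentiable convex functions on a convex set C with φ strictly convex. Then Lφ − f is convex on the relative interior of C if and only if f(x) ≤ f(y) + ⟨∇f(y), x − y⟩ + L·D_φ(x,y) for all x, y in the relative interior of C, where D_φ is the Bregman divergence of φ. -/
open scoped RealInnerProductSpace

/-!
The function `Lφ − f` is differentiable with gradient `L∇φ − ∇f`, and a differentiable function
is convex on a convex set exactly when it lies above its tangent planes there. The relative
interior of a convex set is convex, and on it the tangent-plane inequality for `Lφ − f`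
rearranges to `f x ≤ f y + ⟪∇f y, x − y⟫ + L D_φ(x, y)`.
-/

section IntrinsicInterior
variable {𝕜 V : Type*} [Ring 𝕜] [SeminormedAddCommGroup V] [Module 𝕜 V] {C : Set V} {x : V}

theorem mem_intrinsicInterior_iff_ball :
    x ∈ intrinsicInterior 𝕜 C ↔
      x ∈ affineSpan 𝕜 C ∧ ∃ ε > 0, Metric.ball x ε ∩ affineSpan 𝕜 C ⊆ C := by
  constructor
  · rintro ⟨x, hx, rfl⟩
    rw [mem_interior_iff_mem_nhds, nhds_induced, Filter.mem_comap] at hx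
    obtain ⟨t, ht, hsub⟩ := hx
    obtain ⟨ε, hε, hball⟩ := Metric.mem_nhds_iff.mp ht
    exact ⟨x.2, ε, hε, fun v ⟨hv, hvA⟩ =>
      hsub (show (⟨v, hvA⟩ : affineSpan 𝕜 C) ∈ _ from hball hv)⟩
  · rintro ⟨hxA, ε, hε, hsub⟩
    refine ⟨⟨x, hxA⟩, ?_, rfl⟩
    rw [mem_interior_iff_mem_nhds, nhds_induced, Filter.mem_comap]
    exact ⟨Metric.ball x ε, Metric.ball_mem_nhds x hε, fun p hp => hsub ⟨hp, p.2⟩⟩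

theorem Convex.intrinsicInterior [PartialOrder 𝕜] (hC : Convex 𝕜 C) :
    Convex 𝕜 (intrinsicInterior 𝕜 C) := by
  intro x hx y hy a b ha hb hab
  rw [mem_intrinsicInterior_iff_ball] at hx hy ⊢
  obtain ⟨hxA, εx, hεx, hx⟩ := hx
  obtain ⟨hyA, εy, hεy, hy⟩ := hy
  have hzA : a • x + b • y ∈ affineSpan 𝕜 C := (affineSpan 𝕜 C).convex hxA hyA ha hb hab
  refine ⟨hzA, min εx εy, lt_min hεx hεy, fun w ⟨hw, hwA⟩ => ?_⟩
  set u := w - (a • x + b • y)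
  have hu : u ∈ (affineSpan 𝕜 C).direction := AffineSubspace.vsub_mem_direction hwA hzA
  have hu_lt : ‖u‖ < min εx εy := by rwa [Metric.mem_ball, dist_eq_norm] at hw
  have hshift {p : V} {ε : ℝ} (hpA : p ∈ affineSpan 𝕜 C) (hε : min εx εy ≤ ε)
      (hp : Metric.ball p ε ∩ affineSpan 𝕜 C ⊆ C) : p + u ∈ C :=
    hp ⟨by simpa [dist_eq_norm] using hu_lt.trans_le hε,
      by simpa [add_comm] using AffineSubspace.vadd_mem_of_mem_direction hu hpA⟩
  have hw_eq : a • (x + u) + b • (y + u) = w := by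
    rw [smul_add, smul_add, add_add_add_comm, ← add_smul, hab, one_smul]
    exact add_sub_cancel _ _
  exact hw_eq ▸ hC (hshift hxA (min_le_left _ _) hx) (hshift hyA (min_le_right _ _) hy) ha hb hab

end IntrinsicInterior

section Gradient
variable {V : Type*} [NormedAddCommGroup V] [InnerProductSpace ℝ V] [CompleteSpace V]
  {f g : V → ℝ} {f' g' x : V}

theorem HasGradientAt.sub (hf : HasGradientAt f f' x) (hg : HasGradientAt g g' x) :
    HasGradientAt (fun y => f y - g y) (f' - g') x := by
  rw [hasGradientAt_iff_hasFDerivAt, map_sub]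
  exact hf.hasFDerivAt.sub hg.hasFDerivAt

theorem HasGradientAt.const_mul (c : ℝ) (hf : HasGradientAt f f' x) :
    HasGradientAt (fun y => c * f y) (c • f') x := by
  rw [hasGradientAt_iff_hasFDerivAt, map_smul]
  exact hf.hasFDerivAt.const_mul c

end Gradient

section FirstOrder
variable {V : Type*} [NormedAddCommGroup V] [InnerProductSpace ℝ V] {s : Set V} {g : V → ℝ}

theorem ConvexOn.add_inner_le_of_hasGradientAt [CompleteSpace V] (hg : ConvexOn ℝ s g)
    {x y g' : V} (hx : x ∈ s) (hy : y ∈ s) (hg' : HasGradientAt g g' y) :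
    g y + ⟪g', x - y⟫ ≤ g x := by
  have hline : ConvexOn ℝ (Set.Icc (0 : ℝ) 1) (g ∘ AffineMap.lineMap y x) :=
    (hg.comp_affineMap _).subset (fun t ht => hg.1.lineMap_mem hy hx ht)
      (convex_Icc _ _)
  have hderiv : HasDerivAt (g ∘ AffineMap.lineMap y x) ⟪g', x - y⟫ (0 : ℝ) := by
    have hg_start : HasFDerivAt g (InnerProductSpace.toDual ℝ V g')
        (AffineMap.lineMap y x (0 : ℝ)) := by
      simpa using hg'.hasFDerivAt
    simpa using hg_start.comp_hasDerivAt (0 : ℝ) AffineMap.hasDerivAt_lineMap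
  have hslope := hline.le_slope_of_hasDerivAt (by simp) (by simp) zero_lt_one hderiv
  simp only [slope_def_field, Function.comp_apply, AffineMap.lineMap_apply_one,
    AffineMap.lineMap_apply_zero, sub_zero, div_one] at hslope
  linarith

theorem convexOn_of_forall_add_inner_le (hs : Convex ℝ s) (G : V → V)
    (h : ∀ x ∈ s, ∀ y ∈ s, g y + ⟪G y, x - y⟫ ≤ g x) : ConvexOn ℝ s g := by
  refine ⟨hs, fun x hx y hy a b ha hb hab => ?_⟩
  set z := a • x + b • y
  have hz : z ∈ s := hs hx hy ha hb hab
  have hsum : a * ⟪G z, x - z⟫ + b * ⟪G z, y - z⟫ = 0 := by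
    obtain rfl : b = 1 - a := by linarith
    simp only [z, inner_sub_right, inner_add_right, real_inner_smul_right]
    ring
  have hx' := mul_le_mul_of_nonneg_left (h x hx z hz) ha
  have hy' := mul_le_mul_of_nonneg_left (h y hy z hz) hb
  simp only [smul_eq_mul]
  linear_combination hx' + hy' - hsum - g z * hab

theorem convexOn_iff_forall_add_inner_le [CompleteSpace V] (hs : Convex ℝ s) {G : V → V}
    (hG : ∀ y ∈ s, HasGradientAt g (G y) y) :
    ConvexOn ℝ s g ↔ ∀ x ∈ s, ∀ y ∈ s, g y + ⟪G y, x - y⟫ ≤ g x :=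
  ⟨fun hg _ hx y hy => hg.add_inner_le_of_hasGradientAt hx hy (hG y hy),
    convexOn_of_forall_add_inner_le hs G⟩

end FirstOrder

theorem stmt_1_general {V : Type*} [NormedAddCommGroup V] [InnerProductSpace ℝ V]
    [FiniteDimensional ℝ V]
    (C : Set V) (hC : Convex ℝ C) (f φ : V → ℝ)
    (hf : Differentiable ℝ f) (hφ : Differentiable ℝ φ) (L : ℝ) :
    ConvexOn ℝ (intrinsicInterior ℝ C) (fun x => L * φ x - f x) ↔
      ∀ x ∈ intrinsicInterior ℝ C, ∀ y ∈ intrinsicInterior ℝ C,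
        f x ≤ f y + ⟪gradient f y, x - y⟫ +
          L * (φ x - φ y - ⟪gradient φ y, x - y⟫) := by
  rw [convexOn_iff_forall_add_inner_le hC.intrinsicInterior
    fun y _ => ((hφ y).hasGradientAt.const_mul L).sub (hf y).hasGradientAt]
  refine forall₄_congr fun _ _ _ _ => ?_
  rw [inner_sub_left, real_inner_smul_left]
  constructor <;> intro h <;> linarith

/-- Relative smoothness (`Lφ − f` convex on the relative interior of `C`) is equivalent
to the descent-lemma-type inequality `f(x) ≤ f(y) + ⟨∇f(y), x − y⟩ + L·D_φ(x,y)`. -/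
theorem stmt_1 {V : Type*} [NormedAddCommGroup V] [InnerProductSpace ℝ V]
    [FiniteDimensional ℝ V]
    (C : Set V) (hC : Convex ℝ C) (f φ : V → ℝ)
    (hf : Differentiable ℝ f) (hφ : Differentiable ℝ φ)
    (hfc : ConvexOn ℝ C f) (hφc : StrictConvexOn ℝ C φ) (L : ℝ) :
    ConvexOn ℝ (intrinsicInterior ℝ C) (fun x => L * φ x - f x) ↔
      ∀ x ∈ intrinsicInterior ℝ C, ∀ y ∈ intrinsicInterior ℝ C,
        f x ≤ f y + ⟪gradient f y, x - y⟫ +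
          L * (φ x - φ y - ⟪gradient φ y, x - y⟫) :=
  stmt_1_general C hC f φ hf hφ L
end

section
/- Let f and φ be differentiable convex functions on a convex open set C. Then Lφ − f is convex on C if and only if ⟨∇f(x) − ∇f(y), x − y⟩ ≤ L·(D_φ(x,y) + D_φ(y,x)) for all x, y ∈ C. -/
/-!
A differentiable function is convex on a convex set iff its derivative is monotone there,
i.e. `Dg(y)(x - y) ≤ Dg(x)(x - y)`: restrict to segments, where this is the one-variable
criterion. Applied to `g = Lφ - f`, the symmetrized Bregman divergence
`D_φ(x,y) + D_φ(y,x)` is exactly `⟨∇φ(x) - ∇φ(y), x - y⟩`, so monotonicity of `∇g` is the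
stated inequality.
-/

open scoped RealInnerProductSpace

open Set AffineMap

section LineRestriction

variable {E : Type*} [AddCommGroup E] [Module ℝ E] {C : Set E} {g : E → ℝ}

theorem ConvexOn.comp_lineMap (hg : ConvexOn ℝ C g) {x y : E} (hx : x ∈ C) (hy : y ∈ C) :
    ConvexOn ℝ (Icc (0 : ℝ) 1) fun t => g (lineMap x y t) :=
  (hg.comp_affineMap (lineMap x y)).subset (fun _ ht => hg.1.lineMap_mem hx hy ht) (convex_Icc 0 1)

theorem convexOn_iff_forall_convexOn_comp_lineMap (hC : Convex ℝ C) :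
    ConvexOn ℝ C g ↔ ∀ x ∈ C, ∀ y ∈ C, ConvexOn ℝ (Icc (0 : ℝ) 1) fun t => g (lineMap x y t) := by
  refine ⟨fun hg x hx y hy => hg.comp_lineMap hx hy, fun h => ⟨hC, ?_⟩⟩
  intro x hx y hy a b ha hb hab
  have key := (h x hx y hy).2 (left_mem_Icc.2 zero_le_one) (right_mem_Icc.2 zero_le_one) ha hb hab
  simp only [smul_eq_mul, mul_zero, mul_one, zero_add, lineMap_apply_zero,
    lineMap_apply_one] at key
  rwa [lineMap_apply_module, ← eq_sub_of_add_eq hab] at key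

end LineRestriction

theorem convexOn_iff_monotoneOn_deriv {D : Set ℝ} (hD : Convex ℝ D) {h : ℝ → ℝ}
    (hh : Differentiable ℝ h) : ConvexOn ℝ D h ↔ MonotoneOn (deriv h) D :=
  ⟨fun hconv => hconv.monotoneOn_deriv fun x _ => hh x, fun hmono =>
    (hmono.mono interior_subset).convexOn_of_deriv hD hh.continuous.continuousOn
      hh.differentiableOn⟩

section FirstOrder

variable {E : Type*} [NormedAddCommGroup E] [NormedSpace ℝ E] {C : Set E} {g : E → ℝ}

theorem deriv_comp_lineMap (hg : Differentiable ℝ g) (x y : E) :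
    deriv (fun t : ℝ => g (lineMap x y t)) = fun t => fderiv ℝ g (lineMap x y t) (y - x) :=
  funext fun t => ((hg _).hasFDerivAt.comp_hasDerivAt t hasDerivAt_lineMap).deriv

theorem convexOn_iff_fderiv_monotone (hC : Convex ℝ C) (hg : Differentiable ℝ g) :
    ConvexOn ℝ C g ↔ ∀ x ∈ C, ∀ y ∈ C, fderiv ℝ g y (x - y) ≤ fderiv ℝ g x (x - y) := by
  have hline : ∀ x y : E, Differentiable ℝ fun t : ℝ => g (lineMap x y t) := fun x y =>
    hg.comp (lineMap x y : ℝ →ᵃ[ℝ] E).differentiable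
  simp_rw [convexOn_iff_forall_convexOn_comp_lineMap hC,
    convexOn_iff_monotoneOn_deriv (convex_Icc 0 1) (hline _ _), deriv_comp_lineMap hg]
  constructor
  · intro H x hx y hy
    simpa using H y hy x hx (left_mem_Icc.2 zero_le_one) (right_mem_Icc.2 zero_le_one) zero_le_one
  · intro H x hx y hy s hs t ht hst
    obtain rfl | hst := hst.eq_or_lt
    · exact le_rfl
    have key := H _ (hC.lineMap_mem hx hy ht) _ (hC.lineMap_mem hx hy hs)
    rw [show lineMap x y t - lineMap x y s = (t - s) • (y - x) by
      simp only [lineMap_apply_module']; module] at key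
    simp only [map_smul, smul_eq_mul] at key
    exact le_of_mul_le_mul_left key (sub_pos.2 hst)

end FirstOrder

section Gradient

variable {V : Type*} [NormedAddCommGroup V] [InnerProductSpace ℝ V] [CompleteSpace V]

theorem inner_gradient_sub_gradient (f : V → ℝ) (x y v : V) :
    ⟪gradient f x - gradient f y, v⟫ = fderiv ℝ f x v - fderiv ℝ f y v := by
  rw [inner_sub_left, inner_gradient_left, inner_gradient_left]

theorem bregman_add_bregman_swap (φ : V → ℝ) (x y : V) :
    (φ x - φ y - ⟪gradient φ y, x - y⟫) + (φ y - φ x - ⟪gradient φ x, y - x⟫) =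
      fderiv ℝ φ x (x - y) - fderiv ℝ φ y (x - y) := by
  rw [inner_gradient_left, inner_gradient_left, ← neg_sub x y, map_neg]
  ring

end Gradient

theorem stmt_2_general {V : Type*} [NormedAddCommGroup V] [InnerProductSpace ℝ V]
    [FiniteDimensional ℝ V]
    (C : Set V) (hC : Convex ℝ C) (f φ : V → ℝ)
    (hf : Differentiable ℝ f) (hφ : Differentiable ℝ φ)
    (L : ℝ) :
    ConvexOn ℝ C (fun x => L * φ x - f x) ↔
      ∀ x ∈ C, ∀ y ∈ C,
        ⟪gradient f x - gradient f y, x - y⟫ ≤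
          L * ((φ x - φ y - ⟪gradient φ y, x - y⟫) +
               (φ y - φ x - ⟪gradient φ x, y - x⟫)) := by
  have hfderiv : ∀ x v : V,
      fderiv ℝ (fun x => L * φ x - f x) x v = L * fderiv ℝ φ x v - fderiv ℝ f x v := by
    intro x v
    rw [fderiv_fun_sub ((hφ x).const_mul L) (hf x), fderiv_const_mul (hφ x)]
    rfl
  rw [convexOn_iff_fderiv_monotone hC (by fun_prop)]
  refine forall₂_congr fun x _ => forall₂_congr fun y _ => ?_
  rw [hfderiv, hfderiv, inner_gradient_sub_gradient, bregman_add_bregman_swap]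
  constructor <;> intro h <;> linarith

/-- On an open convex set, `Lφ − f` is convex iff
`⟨∇f(x) − ∇f(y), x − y⟩ ≤ L·(D_φ(x,y) + D_φ(y,x))` for all `x, y ∈ C`. -/
theorem stmt_2 {V : Type*} [NormedAddCommGroup V] [InnerProductSpace ℝ V]
    [FiniteDimensional ℝ V]
    (C : Set V) (hC : Convex ℝ C) (hCo : IsOpen C) (f φ : V → ℝ)
    (hf : Differentiable ℝ f) (hφ : Differentiable ℝ φ)
    (hfc : ConvexOn ℝ C f) (hφc : ConvexOn ℝ C φ) (L : ℝ) :
    ConvexOn ℝ C (fun x => L * φ x - f x) ↔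
      ∀ x ∈ C, ∀ y ∈ C,
        ⟪gradient f x - gradient f y, x - y⟫ ≤
          L * ((φ x - φ y - ⟪gradient φ y, x - y⟫) +
               (φ y - φ x - ⟪gradient φ x, y - x⟫)) :=
  stmt_2_general C hC f φ hf hφ L
end

section
/- Classical mutual information, as a function of the joint distribution, is 1-smooth relative to negative Shannon entropy: the function P ↦ −H(P) − I_c(P) is convex on the relative interior of the simplex of joint distributions Δ_{n×m}, where I_c(P) = Σ_{ij} P_{ij} log(P_{ij}/(q_i r_j)), with q_i = Σⱼ P_{ij} and r_j = Σᵢ P_{ij}, is the mutual information of the joint distribution P, and −H(P) = Σ_{ij} P_{ij} log P_{ij}. -/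
open scoped BigOperators

/-- Mutual information of a joint distribution `P` on `Fin n × Fin m`:
`I_c(P) = ∑_{ij} P_{ij} log (P_{ij} / (q_i r_j))` with marginals
`q_i = ∑_j P_{ij}`, `r_j = ∑_i P_{ij}`. -/
noncomputable def mutInfJoint {n m : ℕ} (P : Fin n → Fin m → ℝ) : ℝ :=
  ∑ i, ∑ j, P i j * Real.log (P i j / ((∑ j', P i j') * (∑ i', P i' j)))

lemma convex_intrinsicInterior {E : Type*} [NormedAddCommGroup E] [NormedSpace ℝ E]
    {s : Set E} (hs : Convex ℝ s) : Convex ℝ (intrinsicInterior ℝ s) := by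
  rcases s.eq_empty_or_nonempty with rfl | hne
  · rw [intrinsicInterior_empty]; exact convex_empty
  · haveI : Nonempty (affineSpan ℝ s) :=
      ⟨⟨hne.choose, subset_affineSpan ℝ s hne.choose_spec⟩⟩
    set A := affineSpan ℝ s with hA
    set D := A.direction with hD
    obtain ⟨p⟩ := (inferInstance : Nonempty A)
    set e : D ≃ᵢ A := IsometryEquiv.vaddConst p with he
    set U : Set A := ((↑) ⁻¹' s : Set A) with hU
    set U₀ : Set D := ⇑e ⁻¹' U with hU₀
    have hval : ∀ v : D, ((e v : A) : E) = (v : E) + (p : E) := by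
      intro v
      simp [he, IsometryEquiv.vaddConst_apply]
      rfl
    have key : ∀ a b : ℝ, a + b = 1 → ∀ u v : E,
        a • (u + (p : E)) + b • (v + (p : E)) = a • u + b • v + (p : E) := by
      intro a b hab u v
      have h := add_smul a b (p : E)
      rw [hab, one_smul] at h
      rw [smul_add, smul_add]
      conv_rhs => rw [h]
      abel
    have hU₀conv : Convex ℝ U₀ := by
      intro u hu v hv a b ha hb hab
      have hu' : (u : E) + (p : E) ∈ s := by rw [← hval u]; exact hu
      have hv' : (v : E) + (p : E) ∈ s := by rw [← hval v]; exact hv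
      have hcomb := hs hu' hv' ha hb hab
      show e (a • u + b • v) ∈ U
      have : ((e (a • u + b • v) : A) : E) ∈ s := by
        rw [hval]
        push_cast
        rw [← key a b hab]
        exact hcomb
      exact this
    have himg : intrinsicInterior ℝ s = (fun v : D => (v : E) + (p : E)) '' interior U₀ := by
      have h1 : ⇑e ⁻¹' interior U = interior (⇑e ⁻¹' U) := e.toHomeomorph.preimage_interior U
      have h2 : interior U = ⇑e '' interior U₀ := by
        rw [hU₀, ← h1, Set.image_preimage_eq _ e.surjective]
      rw [intrinsicInterior]
      show Subtype.val '' interior U = _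
      rw [h2, Set.image_image]
      exact Set.image_congr fun v _ => hval v
    rw [himg]
    rintro x ⟨u, hu, rfl⟩ y ⟨v, hv, rfl⟩ a b ha hb hab
    refine ⟨a • u + b • v, hU₀conv.interior hu hv ha hb hab, ?_⟩
    push_cast
    rw [key a b hab]


lemma aux_eq {n m : ℕ} (P : Fin n → Fin m → ℝ) (hP : ∀ i j, 0 ≤ P i j) :
    (∑ i, ∑ j, P i j * Real.log (P i j)) - mutInfJoint P =
      (∑ i, (∑ j, P i j) * Real.log (∑ j, P i j)) +
      (∑ j, (∑ i, P i j) * Real.log (∑ i, P i j)) := by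
  unfold mutInfJoint
  rw [← Finset.sum_sub_distrib]
  have key : ∀ i, (∑ j, P i j * Real.log (P i j)) -
      (∑ j, P i j * Real.log (P i j / ((∑ j', P i j') * (∑ i', P i' j)))) =
      ∑ j, (P i j * Real.log (∑ j', P i j') + P i j * Real.log (∑ i', P i' j)) := by
    intro i
    rw [← Finset.sum_sub_distrib]
    refine Finset.sum_congr rfl fun j _ => ?_
    rcases eq_or_lt_of_le (hP i j) with h | h
    · simp [← h]
    · have hq : 0 < ∑ j', P i j' :=
        lt_of_lt_of_le h (Finset.single_le_sum (fun k _ => hP i k) (Finset.mem_univ j))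
      have hr : 0 < ∑ i', P i' j :=
        lt_of_lt_of_le h (Finset.single_le_sum (fun k _ => hP k j) (Finset.mem_univ i))
      rw [Real.log_div h.ne' (mul_ne_zero hq.ne' hr.ne'), Real.log_mul hq.ne' hr.ne']
      ring
  rw [Finset.sum_congr rfl fun i _ => key i]
  have : ∀ i, ∑ j, (P i j * Real.log (∑ j', P i j') + P i j * Real.log (∑ i', P i' j)) =
      (∑ j, P i j) * Real.log (∑ j', P i j') + ∑ j, P i j * Real.log (∑ i', P i' j) := by
    intro i
    rw [Finset.sum_add_distrib, Finset.sum_mul]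
  rw [Finset.sum_congr rfl fun i _ => this i, Finset.sum_add_distrib, Finset.sum_comm]
  congr 1
  refine Finset.sum_congr rfl fun j _ => ?_
  rw [Finset.sum_mul]

lemma aux_convex {n m : ℕ} :
    ConvexOn ℝ {P : Fin n → Fin m → ℝ | ∀ i j, 0 ≤ P i j}
      (fun P => (∑ i, (∑ j, P i j) * Real.log (∑ j, P i j)) +
        (∑ j, (∑ i, P i j) * Real.log (∑ i, P i j))) := by
  have hφ := Real.convexOn_mul_log
  constructor
  · intro x hx y hy a b ha hb _
    intro i j
    exact add_nonneg (mul_nonneg ha (hx i j)) (mul_nonneg hb (hy i j))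
  · intro x hx y hy a b ha hb hab
    simp only [Pi.add_apply, Pi.smul_apply, smul_eq_mul]
    have hq : ∀ i, ∑ j, (a * x i j + b * y i j) = a * (∑ j, x i j) + b * (∑ j, y i j) := by
      intro i; rw [Finset.sum_add_distrib, Finset.mul_sum, Finset.mul_sum]
    have hr : ∀ j, ∑ i, (a * x i j + b * y i j) = a * (∑ i, x i j) + b * (∑ i, y i j) := by
      intro j; rw [Finset.sum_add_distrib, Finset.mul_sum, Finset.mul_sum]
    have h1 : ∀ i : Fin n, (a * (∑ j, x i j) + b * (∑ j, y i j)) *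
        Real.log (a * (∑ j, x i j) + b * (∑ j, y i j)) ≤
        a * ((∑ j, x i j) * Real.log (∑ j, x i j)) +
        b * ((∑ j, y i j) * Real.log (∑ j, y i j)) := by
      intro i
      exact hφ.2 (Set.mem_Ici.mpr (Finset.sum_nonneg fun k _ => hx i k))
        (Set.mem_Ici.mpr (Finset.sum_nonneg fun k _ => hy i k)) ha hb hab
    have h2 : ∀ j : Fin m, (a * (∑ i, x i j) + b * (∑ i, y i j)) *
        Real.log (a * (∑ i, x i j) + b * (∑ i, y i j)) ≤
        a * ((∑ i, x i j) * Real.log (∑ i, x i j)) +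
        b * ((∑ i, y i j) * Real.log (∑ i, y i j)) := by
      intro j
      exact hφ.2 (Set.mem_Ici.mpr (Finset.sum_nonneg fun k _ => hx k j))
        (Set.mem_Ici.mpr (Finset.sum_nonneg fun k _ => hy k j)) ha hb hab
    calc (∑ i, (∑ j, (a * x i j + b * y i j)) * Real.log (∑ j, (a * x i j + b * y i j))) +
          ∑ j, (∑ i, (a * x i j + b * y i j)) * Real.log (∑ i, (a * x i j + b * y i j))
        = (∑ i, (a * (∑ j, x i j) + b * (∑ j, y i j)) *
            Real.log (a * (∑ j, x i j) + b * (∑ j, y i j))) +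
          ∑ j, (a * (∑ i, x i j) + b * (∑ i, y i j)) *
            Real.log (a * (∑ i, x i j) + b * (∑ i, y i j)) := by
          congr 1
          · exact Finset.sum_congr rfl fun i _ => by rw [hq i]
          · exact Finset.sum_congr rfl fun j _ => by rw [hr j]
      _ ≤ (∑ i, (a * ((∑ j, x i j) * Real.log (∑ j, x i j)) +
            b * ((∑ j, y i j) * Real.log (∑ j, y i j)))) +
          ∑ j, (a * ((∑ i, x i j) * Real.log (∑ i, x i j)) +
            b * ((∑ i, y i j) * Real.log (∑ i, y i j))) := by
          exact add_le_add (Finset.sum_le_sum fun i _ => h1 i)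
            (Finset.sum_le_sum fun j _ => h2 j)
      _ = a * ((∑ i, (∑ j, x i j) * Real.log (∑ j, x i j)) +
            ∑ j, (∑ i, x i j) * Real.log (∑ i, x i j)) +
          b * ((∑ i, (∑ j, y i j) * Real.log (∑ j, y i j)) +
            ∑ j, (∑ i, y i j) * Real.log (∑ i, y i j)) := by
          simp only [Finset.sum_add_distrib, Finset.mul_sum, mul_add]
          ring

/-- Classical mutual information, as a function of the joint distribution, is `1`-smooth
relative to negative Shannon entropy: `P ↦ −H(P) − I_c(P)` is convex on the relative
interior of the simplex of joint distributions `Δ_{n×m}`. -/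
theorem stmt_5 {n m : ℕ} :
    ConvexOn ℝ
      (intrinsicInterior ℝ
        {P : Fin n → Fin m → ℝ | (∀ i j, 0 ≤ P i j) ∧ ∑ i, ∑ j, P i j = 1})
      (fun P => (∑ i, ∑ j, P i j * Real.log (P i j)) - mutInfJoint P) := by
  set S : Set (Fin n → Fin m → ℝ) :=
    {P | (∀ i j, 0 ≤ P i j) ∧ ∑ i, ∑ j, P i j = 1} with hS
  have hSconv : Convex ℝ S := by
    intro x hx y hy a b ha hb hab
    refine ⟨fun i j => add_nonneg (mul_nonneg ha (hx.1 i j)) (mul_nonneg hb (hy.1 i j)), ?_⟩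
    simp only [Pi.add_apply, Pi.smul_apply, smul_eq_mul]
    have : ∀ i, ∑ j, (a * x i j + b * y i j) = a * (∑ j, x i j) + b * (∑ j, y i j) := by
      intro i; rw [Finset.sum_add_distrib, Finset.mul_sum, Finset.mul_sum]
    rw [Finset.sum_congr rfl fun i _ => this i, Finset.sum_add_distrib,
      ← Finset.mul_sum, ← Finset.mul_sum, hx.2, hy.2, mul_one, mul_one, hab]
  have hsub : intrinsicInterior ℝ S ⊆ S := intrinsicInterior_subset
  refine ⟨convex_intrinsicInterior hSconv, ?_⟩
  intro x hx y hy a b ha hb hab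
  have hx' := hsub hx
  have hy' := hsub hy
  have hxy' : a • x + b • y ∈ S := hSconv hx' hy' ha hb hab
  simp only
  rw [aux_eq _ hxy'.1, aux_eq _ hx'.1, aux_eq _ hy'.1]
  exact aux_convex.2 hx'.1 hy'.1 ha hb hab
end

section
/- Quantum mutual information of a bipartite state is 1-smooth relative to negative von Neumann entropy: for density matrices ρ, σ on H_B ⊗ H_R with full support, ⟨∇I_q(ρ) − ∇I_q(σ), ρ − σ⟩ ≤ S(ρ‖σ) + S(σ‖ρ), where I_q(ρ) = S(ρ_R) + S(ρ_B) − S(ρ) with ρ_B = tr_R(ρ), ρ_R = tr_B(ρ) fixed, and ∇I_q(ρ) = log ρ − log(ρ_B) ⊗ I_R. -/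
open scoped BigOperators Kronecker Matrix ComplexOrder

/-- Matrix logarithm of a Hermitian matrix, via the spectral decomposition
(junk value `0` on non-Hermitian input). -/
noncomputable def matLog {d : Type*} [Fintype d] [DecidableEq d]
    (A : Matrix d d ℂ) : Matrix d d ℂ :=
  if h : A.IsHermitian then
    (h.eigenvectorUnitary : Matrix d d ℂ) *
      Matrix.diagonal (fun i => (Real.log (h.eigenvalues i) : ℂ)) *
      star (h.eigenvectorUnitary : Matrix d d ℂ)
  else 0

/-- Partial trace over the second (reference) factor. -/
noncomputable def ptraceR {nB nR : ℕ}
    (ρ : Matrix (Fin nB × Fin nR) (Fin nB × Fin nR) ℂ) : Matrix (Fin nB) (Fin nB) ℂ :=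
  Matrix.of fun b b' => ∑ r, ρ (b, r) (b', r)

/-- Quantum relative entropy `S(ρ‖σ) = tr[ρ(log ρ − log σ)]` (real part). -/
noncomputable def relEnt {d : Type*} [Fintype d] [DecidableEq d]
    (ρ σ : Matrix d d ℂ) : ℝ :=
  (Matrix.trace (ρ * (matLog ρ - matLog σ))).re

/-- Gradient of quantum mutual information `I_q` at a full-rank bipartite state:
`∇I_q(ρ) = log ρ − (log ρ_B) ⊗ I_R`. -/
noncomputable def gradIq {nB nR : ℕ}
    (ρ : Matrix (Fin nB × Fin nR) (Fin nB × Fin nR) ℂ) :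
    Matrix (Fin nB × Fin nR) (Fin nB × Fin nR) ℂ :=
  matLog ρ - (matLog (ptraceR ρ)) ⊗ₖ (1 : Matrix (Fin nR) (Fin nR) ℂ)

/-! Pairing with `M ⊗ I` is pairing `M` with the partial trace, so the left-hand side equals
`⟨log ρ - log σ, ρ - σ⟩ - ⟨log ρ_B - log σ_B, ρ_B - σ_B⟩`, and the first term is
`S(ρ‖σ) + S(σ‖ρ)`. For the second term, write Hermitian `A, B` in eigenbases `(uᵢ, pᵢ)`, `(vⱼ, qⱼ)`:
then `tr[(f(A) - f(B))(g(A) - g(B))] = ∑ᵢⱼ |⟨uᵢ, vⱼ⟩|² (f pᵢ - f qⱼ)(g pᵢ - g qⱼ)`, which is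
nonnegative whenever `f` and `g` monovary on the spectra, e.g. `f = log`, `g = id` on positive
definite matrices. -/

namespace Matrix

variable {n 𝕜 : Type*} [Fintype n] [DecidableEq n] [RCLike 𝕜]

lemma trace_diagonal_mul_mul_diagonal_mul_conjTranspose (a b : n → ℝ) (W : Matrix n n 𝕜) :
    (diagonal (RCLike.ofReal ∘ a) * W * diagonal (RCLike.ofReal ∘ b) * Wᴴ).trace =
      ((∑ i, ∑ j, ‖W i j‖ ^ 2 * a i * b j : ℝ) : 𝕜) := by
  simp only [trace, diag_apply, mul_apply (M := diagonal _ * W * diagonal _), mul_diagonal,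
    diagonal_mul, conjTranspose_apply, Function.comp_apply, RCLike.star_def]
  push_cast
  refine Finset.sum_congr rfl fun i _ => Finset.sum_congr rfl fun j _ => ?_
  rw [← RCLike.mul_conj]
  ring

namespace IsHermitian

variable {A B : Matrix n n 𝕜} (hA : A.IsHermitian) (hB : B.IsHermitian)

lemma trace_cfc_mul_cfc (f g : ℝ → ℝ) :
    (hA.cfc f * hB.cfc g).trace =
      ((∑ i, ∑ j, ‖(star (hA.eigenvectorUnitary : Matrix n n 𝕜) * hB.eigenvectorUnitary) i j‖ ^ 2
        * f (hA.eigenvalues i) * g (hB.eigenvalues j) : ℝ) : 𝕜) := by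
  set U : Matrix n n 𝕜 := ↑hA.eigenvectorUnitary
  rw [← trace_diagonal_mul_mul_diagonal_mul_conjTranspose (fun i => f (hA.eigenvalues i)),
    ← star_eq_conjTranspose, star_mul, star_star]
  simp only [IsHermitian.cfc, Unitary.conjStarAlgAut_apply, mul_assoc]
  rw [trace_mul_comm U]
  simp only [mul_assoc]
  rfl

lemma cfc_mul (f g : ℝ → ℝ) : hA.cfc (f * g) = hA.cfc f * hA.cfc g := by
  simp only [IsHermitian.cfc, ← map_mul, diagonal_mul_diagonal]
  congr 2
  ext i
  simp

lemma cfc_one : hA.cfc 1 = 1 := by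
  simp [IsHermitian.cfc, Function.comp_def, ← Pi.one_def]

lemma cfc_id : hA.cfc id = A :=
  hA.spectral_theorem.symm

lemma trace_cfc_sub_mul_cfc_sub (f g : ℝ → ℝ) :
    ((hA.cfc f - hB.cfc f) * (hA.cfc g - hB.cfc g)).trace =
      ((∑ i, ∑ j, ‖(star (hA.eigenvectorUnitary : Matrix n n 𝕜) * hB.eigenvectorUnitary) i j‖ ^ 2
        * ((f (hA.eigenvalues i) - f (hB.eigenvalues j)) *
          (g (hA.eigenvalues i) - g (hB.eigenvalues j))) : ℝ) : 𝕜) := by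
  have hAA : hA.cfc f * hA.cfc g = hA.cfc (f * g) * hB.cfc 1 := by
    rw [cfc_mul, cfc_one, mul_one]
  have hBB : hB.cfc f * hB.cfc g = hA.cfc 1 * hB.cfc (f * g) := by
    rw [cfc_mul, cfc_one, one_mul]
  -- inserting `hB.cfc 1 = 1` and `hA.cfc 1 = 1` puts all four terms in the form of
  -- `trace_cfc_mul_cfc`
  rw [sub_mul, mul_sub, mul_sub, hAA, hBB]
  simp only [trace_sub]
  rw [trace_mul_comm (hB.cfc f)]
  simp only [trace_cfc_mul_cfc]
  norm_cast
  simp only [← Finset.sum_sub_distrib]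
  refine Finset.sum_congr rfl fun i _ => Finset.sum_congr rfl fun j _ => ?_
  simp only [Pi.mul_apply, Pi.one_apply]
  ring

lemma re_trace_cfc_sub_mul_cfc_sub_nonneg {f g : ℝ → ℝ} {s : Set ℝ} (hfg : MonovaryOn f g s)
    (hAs : ∀ i, hA.eigenvalues i ∈ s) (hBs : ∀ i, hB.eigenvalues i ∈ s) :
    0 ≤ RCLike.re ((hA.cfc f - hB.cfc f) * (hA.cfc g - hB.cfc g)).trace := by
  rw [trace_cfc_sub_mul_cfc_sub, RCLike.ofReal_re]
  exact Finset.sum_nonneg fun i _ => Finset.sum_nonneg fun j _ =>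
    mul_nonneg (sq_nonneg _) (hfg.sub_mul_sub_nonneg (hBs j) (hAs i))

end IsHermitian
end Matrix

section QuantumEntropy

open Matrix

variable {d : Type*} [Fintype d] [DecidableEq d] {A B : Matrix d d ℂ}

lemma Matrix.IsHermitian.matLog_eq_cfc (hA : A.IsHermitian) : matLog A = hA.cfc Real.log := by
  rw [matLog, dif_pos hA, IsHermitian.cfc, Unitary.conjStarAlgAut_apply]
  rfl

lemma Matrix.PosDef.re_trace_sub_mul_matLog_sub_nonneg (hA : A.PosDef) (hB : B.PosDef) :
    0 ≤ ((matLog A - matLog B) * (A - B)).trace.re := by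
  have h := hA.1.re_trace_cfc_sub_mul_cfc_sub_nonneg hB.1
    (Real.strictMonoOn_log.monotoneOn.monovaryOn monotoneOn_id) hA.eigenvalues_pos
    hB.eigenvalues_pos
  rwa [hA.1.cfc_id, hB.1.cfc_id, ← hA.1.matLog_eq_cfc, ← hB.1.matLog_eq_cfc] at h

lemma relEnt_add_relEnt (ρ σ : Matrix d d ℂ) :
    relEnt ρ σ + relEnt σ ρ = ((matLog ρ - matLog σ) * (ρ - σ)).trace.re := by
  rw [relEnt, relEnt, ← Complex.add_re, ← trace_add, trace_mul_comm (matLog ρ - _)]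
  simp only [sub_mul, mul_sub]
  congr 2
  abel

end QuantumEntropy

section PartialTrace

open Matrix

variable {nB nR : ℕ}

lemma ptraceR_eq_sum_submatrix (ρ : Matrix (Fin nB × Fin nR) (Fin nB × Fin nR) ℂ) :
    ptraceR ρ = ∑ r, ρ.submatrix (fun b => (b, r)) (fun b => (b, r)) := by
  ext b b'
  simp [ptraceR, Matrix.sum_apply]

lemma ptraceR_sub (ρ σ : Matrix (Fin nB × Fin nR) (Fin nB × Fin nR) ℂ) :
    ptraceR (ρ - σ) = ptraceR ρ - ptraceR σ := by
  ext b b'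
  simp [ptraceR, Finset.sum_sub_distrib]

lemma Matrix.PosDef.ptraceR [NeZero nR] {ρ : Matrix (Fin nB × Fin nR) (Fin nB × Fin nR) ℂ}
    (hρ : ρ.PosDef) : (ptraceR ρ).PosDef := by
  rw [ptraceR_eq_sum_submatrix]
  exact posDef_sum Finset.univ_nonempty fun r _ => hρ.submatrix (Prod.mk_left_injective r)

lemma trace_kronecker_one_mul (M : Matrix (Fin nB) (Fin nB) ℂ)
    (X : Matrix (Fin nB × Fin nR) (Fin nB × Fin nR) ℂ) :
    ((M ⊗ₖ (1 : Matrix (Fin nR) (Fin nR) ℂ)) * X).trace = (M * ptraceR X).trace := by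
  simp only [trace, diag_apply, mul_apply, ptraceR, of_apply, kroneckerMap_apply, one_apply,
    Fintype.sum_prod_type, mul_ite, mul_one, mul_zero, ite_mul, zero_mul, Finset.sum_ite_eq,
    Finset.mem_univ, if_true, Finset.mul_sum]
  exact Finset.sum_congr rfl fun b _ => Finset.sum_comm

lemma gradIq_sub_gradIq (ρ σ : Matrix (Fin nB × Fin nR) (Fin nB × Fin nR) ℂ) :
    gradIq ρ - gradIq σ = (matLog ρ - matLog σ) -
      (matLog (ptraceR ρ) - matLog (ptraceR σ)) ⊗ₖ (1 : Matrix (Fin nR) (Fin nR) ℂ) := by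
  ext ⟨b, r⟩ ⟨b', r'⟩
  simp only [gradIq, Matrix.sub_apply, kroneckerMap_apply]
  ring

end PartialTrace

theorem stmt_6_general {nB nR : ℕ}
    (ρ σ : Matrix (Fin nB × Fin nR) (Fin nB × Fin nR) ℂ)
    (hρ : ρ.PosDef) (hσ : σ.PosDef) :
    (Matrix.trace ((gradIq ρ - gradIq σ) * (ρ - σ))).re ≤ relEnt ρ σ + relEnt σ ρ := by
  have h_marginal : 0 ≤ ((matLog (ptraceR ρ) - matLog (ptraceR σ)) *
      (ptraceR ρ - ptraceR σ)).trace.re := by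
    rcases Nat.eq_zero_or_pos nR with rfl | hnR
    · simp [ptraceR] -- the partial traces are empty sums
    · have : NeZero nR := NeZero.of_pos hnR
      exact hρ.ptraceR.re_trace_sub_mul_matLog_sub_nonneg hσ.ptraceR
  rw [gradIq_sub_gradIq, Matrix.sub_mul, Matrix.trace_sub, trace_kronecker_one_mul, ptraceR_sub,
    relEnt_add_relEnt, Complex.sub_re]
  linarith

/-- Quantum mutual information of a bipartite state is `1`-smooth relative to negative
von Neumann entropy: for full-rank density matrices `ρ, σ` on `H_B ⊗ H_R`,
`⟨∇I_q(ρ) − ∇I_q(σ), ρ − σ⟩ ≤ S(ρ‖σ) + S(σ‖ρ)`. -/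
theorem stmt_6 {nB nR : ℕ}
    (ρ σ : Matrix (Fin nB × Fin nR) (Fin nB × Fin nR) ℂ)
    (hρ : ρ.PosDef) (hσ : σ.PosDef)
    (hρtr : ρ.trace = 1) (hσtr : σ.trace = 1) :
    (Matrix.trace ((gradIq ρ - gradIq σ) * (ρ - σ))).re ≤ relEnt ρ σ + relEnt σ ρ :=
  stmt_6_general ρ σ hρ hσ
end

section
/- Mirror descent with constant step size 1/L on an L-relatively-smooth convex objective converges sublinearly: if f is convex, L-smooth relative to a Legendre function φ on a convex set C, and x^{k+1} = argmin_{x∈C} { ⟨∇f(x^k), x⟩ + L·D_φ(x, x^k) }, then f(x^k) − f* ≤ (L/k)·D_φ(x*, x^0) for all k ≥ 1, where x* is any minimizer of f over C. -/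
/-!
Each mirror step satisfies the three-point inequality
`f(x^{k+1}) - f(u) ≤ L (D_φ(u, x^k) - D_φ(u, x^{k+1}))` for every `u ∈ C`. Relative smoothness
bounds `f(x^{k+1})` by the model minimised in the step; the first-order optimality condition of
the step, rewritten with the three-point identity of Bregman divergences, compares the model at
`x^{k+1}` with the model at `u`; convexity of `f` bounds the model at `u` by `f(u) + L D_φ(u, x^k)`.
Taking `u = x^k` shows that `f(x^k)` decreases, and taking `u = x*` and summing telescopes to
`k (f(x^k) - f(x*)) ≤ L D_φ(x*, x^0)`.
-/

open scoped RealInnerProductSpace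

/-- Bregman divergence of a differentiable reference function. -/
noncomputable def bregman {V : Type*} [NormedAddCommGroup V] [InnerProductSpace ℝ V]
    [CompleteSpace V] (φ : V → ℝ) (x y : V) : ℝ :=
  φ x - φ y - ⟪gradient φ y, x - y⟫

section Bregman

variable {V : Type*} [NormedAddCommGroup V] [InnerProductSpace ℝ V] [CompleteSpace V]

theorem ConvexOn.inner_gradient_sub_le_sub {s : Set V} {g : V → ℝ} (hg : ConvexOn ℝ s g)
    {u v : V} (hu : u ∈ s) (hv : v ∈ s) (hgu : DifferentiableAt ℝ g u) :
    ⟪gradient g u, v - u⟫ ≤ g v - g u := by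
  set ℓ : ℝ →ᵃ[ℝ] V := AffineMap.lineMap u v with hℓ
  have hline : ConvexOn ℝ (ℓ ⁻¹' s) (g ∘ ℓ) := hg.comp_affineMap ℓ
  have hderiv : HasDerivAt (g ∘ ℓ) ⟪gradient g u, v - u⟫ 0 := by
    rw [inner_gradient_left]
    exact hgu.hasFDerivAt.comp_hasDerivAt_of_eq 0 AffineMap.hasDerivAt_lineMap (by simp [hℓ])
  simpa [slope, hℓ] using
    hline.le_slope_of_hasDerivAt (by simpa [hℓ]) (by simpa [hℓ]) zero_lt_one hderiv

@[simp]
theorem bregman_self (φ : V → ℝ) (x : V) : bregman φ x x = 0 := by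
  simp [bregman]

theorem bregman_nonneg {s : Set V} {φ : V → ℝ} (hφ : ConvexOn ℝ s φ) {x y : V} (hx : x ∈ s)
    (hy : y ∈ s) (hφy : DifferentiableAt ℝ φ y) : 0 ≤ bregman φ x y := by
  have := hφ.inner_gradient_sub_le_sub hy hx hφy
  rw [bregman]
  linarith

theorem inner_gradient_sub_eq_bregman (φ : V → ℝ) (x y z : V) :
    ⟪gradient φ z - gradient φ y, x - z⟫ = bregman φ x y - bregman φ x z - bregman φ z y := by
  simp only [bregman, inner_sub_left, inner_sub_right]
  ring

theorem le_add_inner_gradient_add_mul_bregman {s : Set V} {f φ : V → ℝ} {L : ℝ}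
    (hsmooth : ConvexOn ℝ s (fun w => L * φ w - f w)) {x y : V} (hx : x ∈ s) (hy : y ∈ s)
    (hf : DifferentiableAt ℝ f x) (hφ : DifferentiableAt ℝ φ x) :
    f y ≤ f x + ⟪gradient f x, y - x⟫ + L * bregman φ y x := by
  have hconvex := hsmooth.inner_gradient_sub_le_sub hx hy ((hφ.const_mul L).sub hf)
  have hgrad : ⟪gradient (fun w => L * φ w - f w) x, y - x⟫
      = L * ⟪gradient φ x, y - x⟫ - ⟪gradient f x, y - x⟫ := by
    simp only [inner_gradient_left, fderiv_fun_sub (hφ.const_mul L) hf, fderiv_const_mul hφ]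
    simp
  rw [hgrad] at hconvex
  rw [bregman]
  linarith

theorem IsMinOn.inner_add_mul_inner_gradient_sub_nonneg {C : Set V} {φ : V → ℝ} {L : ℝ}
    {g p z y : V} (hmin : IsMinOn (fun w => ⟪g, w⟫ + L * bregman φ w p) C z) (hC : Convex ℝ C)
    (hz : z ∈ C) (hy : y ∈ C) (hφ : DifferentiableAt ℝ φ z) :
    0 ≤ ⟪g, y - z⟫ + L * ⟪gradient φ z - gradient φ p, y - z⟫ := by
  have hderiv : HasFDerivAt (fun w => ⟪g, w⟫ + L * bregman φ w p)
      (innerSL ℝ g + L • (fderiv ℝ φ z - innerSL ℝ (gradient φ p))) z := by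
    have hfun : (fun w => ⟪g, w⟫ + L * bregman φ w p) = fun w =>
        ⟪g, w⟫ + L * (φ w - ⟪gradient φ p, w⟫) + -L * (φ p - ⟪gradient φ p, p⟫) := by
      ext w
      simp only [bregman, inner_sub_right]
      ring
    rw [hfun]
    exact (((innerSL ℝ g).hasFDerivAt).add
      ((hφ.hasFDerivAt.sub (innerSL ℝ (gradient φ p)).hasFDerivAt).const_mul L)).add_const _
  have := hmin.localize.hasFDerivWithinAt_nonneg hderiv.hasFDerivWithinAt
    (sub_mem_posTangentConeAt_of_segment_subset (hC.segment_subset hz hy))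
  simpa [inner_sub_left, inner_gradient_left] using this

end Bregman

section MirrorDescent

variable {V : Type*} [NormedAddCommGroup V] [InnerProductSpace ℝ V] [CompleteSpace V]
  {C s : Set V} {f φ : V → ℝ} {L : ℝ}

theorem sub_le_mul_bregman_sub_of_isMinOn (hC : Convex ℝ C) (hsC : s ⊆ C)
    (hfc : ConvexOn ℝ C f) (hsmooth : ConvexOn ℝ s (fun w => L * φ w - f w))
    (hf : Differentiable ℝ f) (hφ : Differentiable ℝ φ) {p z u : V} (hp : p ∈ s) (hz : z ∈ s)
    (hu : u ∈ C) (hmin : IsMinOn (fun w => ⟪gradient f p, w⟫ + L * bregman φ w p) C z) :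
    f z - f u ≤ L * (bregman φ u p - bregman φ u z) := by
  have hdescent := le_add_inner_gradient_add_mul_bregman hsmooth hp hz (hf p) (hφ p)
  have hoptimal := hmin.inner_add_mul_inner_gradient_sub_nonneg hC (hsC hz) hu (hφ z)
  have hconvex := hfc.inner_gradient_sub_le_sub (hsC hp) hu (hf p)
  rw [inner_gradient_sub_eq_bregman] at hoptimal
  have hsplit : ⟪gradient f p, z - p⟫ = ⟪gradient f p, u - p⟫ - ⟪gradient f p, u - z⟫ := by
    simp only [inner_sub_right]
    ring
  linarith

end MirrorDescent

theorem nat_mul_le_sub_of_antitone_of_le_sub_succ {a b : ℕ → ℝ} (ha : Antitone a)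
    (hab : ∀ k, a (k + 1) ≤ b k - b (k + 1)) (k : ℕ) : k * a k ≤ b 0 - b k := by
  induction k with
  | zero => simp
  | succ k ih =>
    have hmono := ha k.le_succ
    have hstep := hab k
    push_cast
    nlinarith [k.cast_nonneg (α := ℝ)]

theorem stmt_7_general {V : Type*} [NormedAddCommGroup V] [InnerProductSpace ℝ V]
    [FiniteDimensional ℝ V]
    (C : Set V) (hC : Convex ℝ C) (f φ : V → ℝ) (L : ℝ) (hL : 0 < L)
    (hf : Differentiable ℝ f) (hfc : ConvexOn ℝ C f)
    -- φ is Legendre: lower semicontinuous, strictly convex, essentially smooth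
    (hφsc : StrictConvexOn ℝ C φ)
    (hφdiff : Differentiable ℝ φ)
    -- f is L-smooth relative to φ on C
    (hsmooth : ConvexOn ℝ (intrinsicInterior ℝ C) (fun x => L * φ x - f x))
    -- the mirror descent iterates, well-defined in the relative interior of C
    (x : ℕ → V) (hmem : ∀ k, x k ∈ intrinsicInterior ℝ C)
    (hiter : ∀ k, ∀ y ∈ C,
      ⟪gradient f (x k), x (k + 1)⟫ + L * bregman φ (x (k + 1)) (x k) ≤
        ⟪gradient f (x k), y⟫ + L * bregman φ y (x k))
    (xstar : V) (hxstar : xstar ∈ C) :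
    ∀ k : ℕ, 1 ≤ k → f (x k) - f xstar ≤ (L / k) * bregman φ xstar (x 0) := by
  have hsC : intrinsicInterior ℝ C ⊆ C := intrinsicInterior_subset
  have hstep : ∀ k, ∀ u ∈ C,
      f (x (k + 1)) - f u ≤ L * (bregman φ u (x k) - bregman φ u (x (k + 1))) :=
    fun k u hu => sub_le_mul_bregman_sub_of_isMinOn hC hsC hfc hsmooth hf hφdiff (hmem k)
      (hmem (k + 1)) hu (isMinOn_iff.2 (hiter k))
  have hDnonneg : ∀ k, ∀ u ∈ C, 0 ≤ bregman φ u (x k) :=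
    fun k _ hu => bregman_nonneg hφsc.convexOn hu (hsC (hmem k)) (hφdiff _)
  have hanti : Antitone fun k => f (x k) - f xstar := antitone_nat_of_succ_le fun k => by
    have hdecrease := hstep k (x k) (hsC (hmem k))
    have hD := hDnonneg (k + 1) (x k) (hsC (hmem k))
    rw [bregman_self] at hdecrease
    nlinarith
  intro k hk
  have htelescope := nat_mul_le_sub_of_antitone_of_le_sub_succ
    (b := fun k => L * bregman φ xstar (x k)) hanti
    (fun k => by simpa only [mul_sub] using hstep k xstar hxstar) k
  have hD := hDnonneg k xstar hxstar
  rw [div_mul_eq_mul_div, le_div_iff₀ (by positivity)]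
  nlinarith

/-- Sublinear convergence of mirror descent with constant step size `1/L`:
if `f` is convex and `L`-smooth relative to a Legendre function `φ` on a convex set `C`,
and the iterates satisfy
`x^{k+1} = argmin_{x∈C} { ⟨∇f(x^k), x⟩ + L·D_φ(x, x^k) }`,
then `f(x^k) − f* ≤ (L/k)·D_φ(x*, x^0)` for all `k ≥ 1`. -/
theorem stmt_7 {V : Type*} [NormedAddCommGroup V] [InnerProductSpace ℝ V]
    [FiniteDimensional ℝ V]
    (C : Set V) (hC : Convex ℝ C) (f φ : V → ℝ) (L : ℝ) (hL : 0 < L)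
    (hf : Differentiable ℝ f) (hfc : ConvexOn ℝ C f)
    -- φ is Legendre: lower semicontinuous, strictly convex, essentially smooth
    (hφlsc : LowerSemicontinuous φ) (hφsc : StrictConvexOn ℝ C φ)
    (hφdiff : Differentiable ℝ φ)
    -- f is L-smooth relative to φ on C
    (hsmooth : ConvexOn ℝ (intrinsicInterior ℝ C) (fun x => L * φ x - f x))
    -- the mirror descent iterates, well-defined in the relative interior of C
    (x : ℕ → V) (hmem : ∀ k, x k ∈ intrinsicInterior ℝ C)
    (hiter : ∀ k, ∀ y ∈ C,
      ⟪gradient f (x k), x (k + 1)⟫ + L * bregman φ (x (k + 1)) (x k) ≤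
        ⟪gradient f (x k), y⟫ + L * bregman φ y (x k))
    -- x* is a minimizer of f over C
    (xstar : V) (hxstar : xstar ∈ C) (hopt : ∀ y ∈ C, f xstar ≤ f y) :
    ∀ k : ℕ, 1 ≤ k → f (x k) - f xstar ≤ (L / k) * bregman φ xstar (x 0) :=
  stmt_7_general C hC f φ L hL hf hfc hφsc hφdiff hsmooth x hmem hiter xstar hxstar
end
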